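/- For every r ≥ 1 and 0 < α < 1, there exists a constant C > 0 (depending only on α) such that I(r) = ∫_0^∞ t^{-α} exp(-t/4 - r²/t) dt ≤ C e^{-r} r^{(1-2α)/2}. -/
import Mathlib

open Real MeasureTheory Set
lemma pieceA (α r : ℝ) (hα0 : 0 < α) (hα1 : α < 1) (hr : 1 ≤ r) :
    IntegrableOn (fun t : ℝ => t ^ (-α) * Real.exp (-t / 4 - r ^ 2 / t)) (Ioc 0 (r/2)) ∧
    (∫ t in Ioc (0:ℝ) (r/2), t ^ (-α) * Real.exp (-t / 4 - r ^ 2 / t))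
      ≤ (2/(2-α)) * Real.exp (-r) * r ^ ((1 - 2*α)/2) := by
  have hr0 : (0:ℝ) < r := lt_of_lt_of_le one_pos hr
  have h2 : (0:ℝ) < 2 - α := by linarith
  set g : ℝ → ℝ := fun t => Real.exp (-r) * (2 / r^2) * t ^ (1 - α) with hg
  have hg_int : IntegrableOn g (Ioc 0 (r/2)) :=
    ((intervalIntegral.intervalIntegrable_rpow' (by linarith : (-1:ℝ) < 1 - α)).1).const_mul _
  have hle : ∀ t ∈ Ioc (0:ℝ) (r/2), t ^ (-α) * Real.exp (-t / 4 - r ^ 2 / t) ≤ g t := by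
    intro t ht
    obtain ⟨ht0, htr⟩ := ht
    have hu0 : (0:ℝ) < r^2 / (2*t) := by positivity
    have h1 : r ≤ r^2 / (2*t) := by
      rw [le_div_iff₀ (by positivity)]
      nlinarith
    have h2' : r^2 / t = 2 * (r^2 / (2*t)) := by field_simp
    have hexp : Real.exp (-t / 4 - r ^ 2 / t) ≤ Real.exp (-r) * (2 * t / r^2) := by
      have e1 : Real.exp (-t / 4 - r ^ 2 / t) ≤ Real.exp (-r - r^2/(2*t)) := by
        apply Real.exp_le_exp.mpr; linarith
      have e2 : Real.exp (-r - r^2/(2*t)) = Real.exp (-r) * Real.exp (-(r^2/(2*t))) := by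
        rw [← Real.exp_add]; ring_nf
      have e3 : Real.exp (-(r^2/(2*t))) ≤ (r^2/(2*t))⁻¹ := by
        rw [Real.exp_neg]
        exact inv_anti₀ hu0 ((le_add_of_nonneg_left zero_le_one).trans
          (by linarith [Real.add_one_le_exp (r^2/(2*t))]))
      have e4 : (r^2/(2*t))⁻¹ = 2 * t / r^2 := by
        rw [inv_div]
      calc Real.exp (-t / 4 - r ^ 2 / t) ≤ Real.exp (-r) * Real.exp (-(r^2/(2*t))) := by
            rw [← e2]; exact e1
        _ ≤ Real.exp (-r) * (2 * t / r^2) := by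
            rw [e4] at e3; exact mul_le_mul_of_nonneg_left e3 (Real.exp_pos _).le
    have hpow : t ^ (-α) * t = t ^ (1 - α) := by
      rw [show (1 - α) = -α + 1 by ring, Real.rpow_add_one ht0.ne']
    calc t ^ (-α) * Real.exp (-t / 4 - r ^ 2 / t)
        ≤ t ^ (-α) * (Real.exp (-r) * (2 * t / r^2)) :=
          mul_le_mul_of_nonneg_left hexp (Real.rpow_nonneg ht0.le _)
      _ = Real.exp (-r) * (2 / r^2) * (t ^ (-α) * t) := by ring
      _ = g t := by rw [hpow]
  have hF_int : IntegrableOn (fun t : ℝ => t ^ (-α) * Real.exp (-t / 4 - r ^ 2 / t))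
      (Ioc 0 (r/2)) := by
    refine hg_int.mono' ?_ ?_
    · exact (Measurable.aestronglyMeasurable (by fun_prop)).restrict
    · filter_upwards [ae_restrict_mem measurableSet_Ioc] with t ht
      rw [Real.norm_eq_abs, abs_of_nonneg (mul_nonneg (Real.rpow_nonneg ht.1.le _) (Real.exp_pos _).le)]
      exact hle t ht
  refine ⟨hF_int, ?_⟩
  have step1 : (∫ t in Ioc (0:ℝ) (r/2), t ^ (-α) * Real.exp (-t / 4 - r ^ 2 / t))
      ≤ ∫ t in Ioc (0:ℝ) (r/2), g t :=
    setIntegral_mono_on hF_int hg_int measurableSet_Ioc hle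
  have hval : (∫ t in Ioc (0:ℝ) (r/2), g t)
      = Real.exp (-r) * (2 / r^2) * ((r/2) ^ (2 - α) / (2 - α)) := by
    rw [hg]
    rw [MeasureTheory.integral_const_mul]
    congr 1
    rw [← intervalIntegral.integral_of_le (by positivity : (0:ℝ) ≤ r/2)]
    rw [integral_rpow (Or.inl (by linarith))]
    rw [Real.zero_rpow (by linarith : (1 - α) + 1 ≠ 0)]
    norm_num
    rw [show (1:ℝ) - α + 1 = 2 - α by ring]
  refine step1.trans ?_
  rw [hval]
  have hb1 : (r/2) ^ (2 - α) ≤ r ^ (2 - α) :=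
    Real.rpow_le_rpow (by positivity) (by linarith) h2.le
  have hb2 : r ^ (2 - α) / r^2 = r ^ (-α) := by
    have h22 : (r:ℝ)^(2:ℕ) = r ^ ((2:ℕ):ℝ) := (Real.rpow_natCast r 2).symm
    rw [h22, ← Real.rpow_sub hr0]
    norm_num
  have hb3 : r ^ (-α) ≤ r ^ ((1 - 2*α)/2) :=
    Real.rpow_le_rpow_of_exponent_le hr (by linarith)
  calc Real.exp (-r) * (2 / r^2) * ((r/2) ^ (2 - α) / (2 - α))
      ≤ Real.exp (-r) * (2 / r^2) * (r ^ (2 - α) / (2 - α)) := by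
        gcongr
    _ = (2/(2-α)) * Real.exp (-r) * (r ^ (2 - α) / r^2) := by ring
    _ = (2/(2-α)) * Real.exp (-r) * r ^ (-α) := by rw [hb2]
    _ ≤ (2/(2-α)) * Real.exp (-r) * r ^ ((1 - 2*α)/2) := by
        apply mul_le_mul_of_nonneg_left hb3 (by positivity)

lemma pieceB (α r : ℝ) (hα0 : 0 < α) (hα1 : α < 1) (hr : 1 ≤ r) :
    IntegrableOn (fun t : ℝ => t ^ (-α) * Real.exp (-t / 4 - r ^ 2 / t)) (Ioc (r/2) (8*r)) ∧
    (∫ t in Ioc (r/2) (8*r), t ^ (-α) * Real.exp (-t / 4 - r ^ 2 / t))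
      ≤ (2 ^ α * Real.sqrt (32 * Real.pi)) * Real.exp (-r) * r ^ ((1 - 2*α)/2) := by
  have hr0 : (0:ℝ) < r := lt_of_lt_of_le one_pos hr
  have hb32 : (0:ℝ) < 1/(32*r) := by positivity
  set h : ℝ → ℝ := fun t => Real.exp (-(1/(32*r)) * (t - 2*r)^2) with hh
  have hh_int : Integrable h := (integrable_exp_neg_mul_sq hb32).comp_sub_right (2*r)
  set g : ℝ → ℝ := fun t => (r/2) ^ (-α) * Real.exp (-r) * h t with hg
  have hg_int : Integrable g := (hh_int.const_mul _)
  have hle : ∀ t ∈ Ioc (r/2) (8*r), t ^ (-α) * Real.exp (-t / 4 - r ^ 2 / t) ≤ g t := by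
    intro t ht
    obtain ⟨ht1, ht2⟩ := ht
    have ht0 : (0:ℝ) < t := lt_trans (by positivity) ht1
    have hp1 : t ^ (-α) ≤ (r/2) ^ (-α) :=
      Real.rpow_le_rpow_of_nonpos (by positivity) ht1.le (by linarith)
    have hid : -t / 4 - r ^ 2 / t = -r - (t - 2*r)^2 / (4*t) := by
      field_simp
      ring
    have hcmp : (1/(32*r)) * (t - 2*r)^2 ≤ (t - 2*r)^2 / (4*t) := by
      rw [show (1/(32*r)) * (t - 2*r)^2 = (t - 2*r)^2 / (32*r) by ring,
        div_le_div_iff₀ (by positivity) (by positivity)]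
      nlinarith [sq_nonneg (t - 2*r)]
    have hexp : Real.exp (-t / 4 - r ^ 2 / t) ≤ Real.exp (-r) * h t := by
      rw [hid, ← Real.exp_add]
      apply Real.exp_le_exp.mpr
      linarith
    calc t ^ (-α) * Real.exp (-t / 4 - r ^ 2 / t)
        ≤ (r/2) ^ (-α) * (Real.exp (-r) * h t) := by
          apply mul_le_mul hp1 hexp (Real.exp_pos _).le (Real.rpow_nonneg (by positivity) _)
      _ = g t := by rw [hg]; ring
  have hF_int : IntegrableOn (fun t : ℝ => t ^ (-α) * Real.exp (-t / 4 - r ^ 2 / t))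
      (Ioc (r/2) (8*r)) := by
    refine (hg_int.integrableOn).mono' ?_ ?_
    · exact (Measurable.aestronglyMeasurable (by fun_prop)).restrict
    · filter_upwards [ae_restrict_mem measurableSet_Ioc] with t ht
      rw [Real.norm_eq_abs, abs_of_nonneg (mul_nonneg
        (Real.rpow_nonneg (lt_trans (by positivity) ht.1).le _) (Real.exp_pos _).le)]
      exact hle t ht
  refine ⟨hF_int, ?_⟩
  have step1 : (∫ t in Ioc (r/2) (8*r), t ^ (-α) * Real.exp (-t / 4 - r ^ 2 / t))
      ≤ ∫ t in Ioc (r/2) (8*r), g t :=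
    setIntegral_mono_on hF_int hg_int.integrableOn measurableSet_Ioc hle
  have step2 : (∫ t in Ioc (r/2) (8*r), g t)
      ≤ (r/2) ^ (-α) * Real.exp (-r) * ∫ t : ℝ, h t := by
    rw [hg]
    simp_rw [mul_assoc, MeasureTheory.integral_const_mul]
    have hI := setIntegral_le_integral (s := Ioc (r/2) (8*r)) hh_int
      (Filter.Eventually.of_forall fun x => (Real.exp_pos _).le)
    exact mul_le_mul_of_nonneg_left (mul_le_mul_of_nonneg_left hI (Real.exp_pos _).le)
      (Real.rpow_nonneg (by positivity) _)
  have hgauss : (∫ t : ℝ, h t) = Real.sqrt (32 * Real.pi * r) := by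
    rw [hh]
    rw [show (fun t : ℝ => Real.exp (-(1/(32*r)) * (t - 2*r)^2))
        = (fun t : ℝ => (fun x : ℝ => Real.exp (-(1/(32*r)) * x^2)) (t - 2*r)) from rfl]
    rw [integral_sub_right_eq_self (fun x : ℝ => Real.exp (-(1/(32*r)) * x^2)) (2*r)]
    rw [integral_gaussian]
    congr 1
    field_simp
  rw [hgauss] at step2
  refine step1.trans (step2.trans ?_)
  have e1 : (r/2) ^ (-α) = 2 ^ α * r ^ (-α) := by
    rw [Real.div_rpow hr0.le (by norm_num), Real.rpow_neg (by norm_num : (0:ℝ) ≤ 2)]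
    field_simp
  have e2 : Real.sqrt (32 * Real.pi * r) = Real.sqrt (32 * Real.pi) * r ^ ((1:ℝ)/2) := by
    rw [Real.sqrt_mul (by positivity)]
    simp [Real.sqrt_eq_rpow]
  have e3 : r ^ (-α) * r ^ ((1:ℝ)/2) = r ^ ((1 - 2*α)/2) := by
    rw [← Real.rpow_add hr0]
    ring_nf
  refine le_of_eq ?_
  rw [e1, e2, ← e3]
  ring

lemma pieceC (α r : ℝ) (hα0 : 0 < α) (hα1 : α < 1) (hr : 1 ≤ r) :
    IntegrableOn (fun t : ℝ => t ^ (-α) * Real.exp (-t / 4 - r ^ 2 / t)) (Ioi (8*r)) ∧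
    (∫ t in Ioi (8*r), t ^ (-α) * Real.exp (-t / 4 - r ^ 2 / t))
      ≤ 8 * Real.exp (-r) * r ^ ((1 - 2*α)/2) := by
  have hr0 : (0:ℝ) < r := lt_of_lt_of_le one_pos hr
  set g : ℝ → ℝ := fun t => Real.exp (-r) * Real.exp (-(1/8) * t) with hg
  have hg_int : IntegrableOn g (Ioi (8*r)) :=
    (exp_neg_integrableOn_Ioi _ (by norm_num : (0:ℝ) < 1/8)).const_mul _
  have hle : ∀ t ∈ Ioi (8*r), t ^ (-α) * Real.exp (-t / 4 - r ^ 2 / t) ≤ g t := by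
    intro t ht
    simp only [mem_Ioi] at ht
    have ht0 : (0:ℝ) < t := lt_trans (by positivity) ht
    have h1 : t ^ (-α) ≤ 1 :=
      Real.rpow_le_one_of_one_le_of_nonpos (by nlinarith) (by linarith)
    have h2 : Real.exp (-t / 4 - r ^ 2 / t) ≤ Real.exp (-r) * Real.exp (-(1/8) * t) := by
      rw [← Real.exp_add]
      apply Real.exp_le_exp.mpr
      have : (0:ℝ) < r^2 / t := by positivity
      linarith
    calc t ^ (-α) * Real.exp (-t / 4 - r ^ 2 / t)
        ≤ 1 * (Real.exp (-r) * Real.exp (-(1/8) * t)) :=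
          mul_le_mul h1 h2 (Real.exp_pos _).le zero_le_one
      _ = g t := by rw [hg]; ring
  have hF_int : IntegrableOn (fun t : ℝ => t ^ (-α) * Real.exp (-t / 4 - r ^ 2 / t))
      (Ioi (8*r)) := by
    refine hg_int.mono' ?_ ?_
    · exact (Measurable.aestronglyMeasurable (by fun_prop)).restrict
    · filter_upwards [ae_restrict_mem measurableSet_Ioi] with t ht
      rw [Real.norm_eq_abs, abs_of_nonneg (mul_nonneg
        (Real.rpow_nonneg (lt_trans (by positivity) ht).le _) (Real.exp_pos _).le)]
      exact hle t ht
  refine ⟨hF_int, ?_⟩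
  have step1 : (∫ t in Ioi (8*r), t ^ (-α) * Real.exp (-t / 4 - r ^ 2 / t))
      ≤ ∫ t in Ioi (8*r), g t :=
    setIntegral_mono_on hF_int hg_int measurableSet_Ioi hle
  have hval : (∫ t in Ioi (8*r), g t) = Real.exp (-r) * (8 * Real.exp (-r)) := by
    rw [hg]
    rw [MeasureTheory.integral_const_mul]
    congr 1
    have := integral_comp_mul_left_Ioi (fun x : ℝ => Real.exp (-x)) (8*r)
      (by norm_num : (0:ℝ) < 1/8)
    simp only [neg_mul] at this ⊢
    rw [this]
    rw [show (1:ℝ)/8 * (8*r) = r by ring, integral_exp_neg_Ioi]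
    simp [smul_eq_mul]
  rw [hval] at step1
  refine step1.trans ?_
  have key : Real.exp (-r) ≤ r ^ ((1 - 2*α)/2) := by
    have h1 : Real.exp (-r) ≤ r⁻¹ := by
      rw [Real.exp_neg]
      exact inv_anti₀ hr0 ((le_add_of_nonneg_left zero_le_one).trans
        (by linarith [Real.add_one_le_exp r]))
    have h2 : r⁻¹ = r ^ (-1:ℝ) := by rw [Real.rpow_neg_one]
    have h3 : r ^ (-1:ℝ) ≤ r ^ ((1 - 2*α)/2) :=
      Real.rpow_le_rpow_of_exponent_le hr (by linarith)
    linarith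
  calc Real.exp (-r) * (8 * Real.exp (-r))
      ≤ Real.exp (-r) * (8 * r ^ ((1 - 2*α)/2)) := by
        apply mul_le_mul_of_nonneg_left _ (Real.exp_pos _).le
        exact mul_le_mul_of_nonneg_left key (by norm_num)
    _ = 8 * Real.exp (-r) * r ^ ((1 - 2*α)/2) := by ring

/-- For `0 < α < 1` there is `C > 0` (depending only on `α`) such that for all `r ≥ 1`,
`I(r) = ∫_0^∞ t^{-α} exp(-t/4 - r²/t) dt ≤ C e^{-r} r^{(1-2α)/2}`. -/
theorem stmt4 (α : ℝ) (hα0 : 0 < α) (hα1 : α < 1) :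
    ∃ C > (0 : ℝ), ∀ r : ℝ, 1 ≤ r →
      (∫ t in Set.Ioi (0 : ℝ), t ^ (-α) * Real.exp (-t / 4 - r ^ 2 / t))
        ≤ C * Real.exp (-r) * r ^ ((1 - 2 * α) / 2) := by
  have h2 : (0:ℝ) < 2 - α := by linarith
  refine ⟨2/(2-α) + 2 ^ α * Real.sqrt (32 * Real.pi) + 8, ?_, fun r hr => ?_⟩
  · have h1 : (0:ℝ) < 2/(2-α) := by positivity
    have h2' : (0:ℝ) < 2 ^ α * Real.sqrt (32 * Real.pi) := by positivity
    linarith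
  · have hr0 : (0:ℝ) < r := lt_of_lt_of_le one_pos hr
    obtain ⟨hAi, hA⟩ := pieceA α r hα0 hα1 hr
    obtain ⟨hBi, hB⟩ := pieceB α r hα0 hα1 hr
    obtain ⟨hCi, hC⟩ := pieceC α r hα0 hα1 hr
    have e1 : Ioc (0:ℝ) (8*r) = Ioc 0 (r/2) ∪ Ioc (r/2) (8*r) :=
      (Set.Ioc_union_Ioc_eq_Ioc (by linarith) (by linarith)).symm
    have e2 : Ioi (0:ℝ) = Ioc 0 (8*r) ∪ Ioi (8*r) :=
      (Set.Ioc_union_Ioi_eq_Ioi (by linarith)).symm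
    have d1 : Disjoint (Ioc (0:ℝ) (r/2)) (Ioc (r/2) (8*r)) := by
      rw [Set.disjoint_left]
      rintro x ⟨_, hx1⟩ ⟨hx2, _⟩
      exact absurd hx1 (not_le.mpr hx2)
    have d2 : Disjoint (Ioc (0:ℝ) (8*r)) (Ioi (8*r)) := by
      rw [Set.disjoint_left]
      rintro x ⟨_, hx1⟩ hx2
      exact absurd hx1 (not_le.mpr hx2)
    have hABi : IntegrableOn (fun t : ℝ => t ^ (-α) * Real.exp (-t / 4 - r ^ 2 / t))
        (Ioc 0 (8*r)) := by rw [e1]; exact hAi.union hBi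
    have hsplit : (∫ t in Set.Ioi (0:ℝ), t ^ (-α) * Real.exp (-t / 4 - r ^ 2 / t))
        = (∫ t in Ioc (0:ℝ) (r/2), t ^ (-α) * Real.exp (-t / 4 - r ^ 2 / t))
          + (∫ t in Ioc (r/2) (8*r), t ^ (-α) * Real.exp (-t / 4 - r ^ 2 / t))
          + (∫ t in Ioi (8*r), t ^ (-α) * Real.exp (-t / 4 - r ^ 2 / t)) := by
      rw [e2, setIntegral_union d2 measurableSet_Ioi hABi hCi, e1,
        setIntegral_union d1 measurableSet_Ioc hAi hBi]
    rw [hsplit]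
    have expand : (2/(2-α) + 2 ^ α * Real.sqrt (32 * Real.pi) + 8) * Real.exp (-r)
          * r ^ ((1 - 2 * α) / 2)
        = 2/(2-α) * Real.exp (-r) * r ^ ((1 - 2*α)/2)
          + (2 ^ α * Real.sqrt (32 * Real.pi)) * Real.exp (-r) * r ^ ((1 - 2*α)/2)
          + 8 * Real.exp (-r) * r ^ ((1 - 2*α)/2) := by ring
    rw [expand]
    exact add_le_add (add_le_add hA hB) hC
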